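/- Let (T(t))_{t≥0} be a C₀-semigroup on a complex Banach space X with infinitesimal generator A such that ‖T(t)v‖/t → 0 as t → ∞ for every v ∈ X. Suppose A has the SVEP, x ∈ D(A), and the local spectra satisfy σ_A(x) ≠ σ_A(Ax). Then T(t) is local mean ergodic at x. -/

import Mathlib

open Filter Topology Metric

/-- A strongly continuous one-parameter semigroup of bounded linear operators:
`T 0 = I`, `T (s+t) = T s ∘ T t` for `s,t ≥ 0`, and `t ↦ T t x` is continuous
on `[0,∞)` for every `x`. -/
structure IsC0Semigroup {X : Type*} [NormedAddCommGroup X] [NormedSpace ℂ X]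
    (T : ℝ → X →L[ℂ] X) : Prop where
  map_zero : T 0 = 1
  map_add : ∀ s t : ℝ, 0 ≤ s → 0 ≤ t → T (s + t) = T s ∘L T t
  strong_continuity : ∀ x : X, ContinuousOn (fun t : ℝ => T t x) (Set.Ici 0)

/-- `A`, with domain `D`, is the infinitesimal generator of the semigroup `T`:
`D = {x : lim_{t→0⁺} (T t x - x)/t exists}` and `A x` is that limit on `D`. -/
structure IsGenerator {X : Type*} [NormedAddCommGroup X] [NormedSpace ℂ X]
    (T : ℝ → X →L[ℂ] X) (D : Set X) (A : X → X) : Prop where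
  mem_domain_iff : ∀ x : X,
    x ∈ D ↔ ∃ y : X, Tendsto (fun t : ℝ => t⁻¹ • (T t x - x)) (𝓝[>] 0) (𝓝 y)
  tendsto_of_mem : ∀ x ∈ D,
    Tendsto (fun t : ℝ => t⁻¹ • (T t x - x)) (𝓝[>] 0) (𝓝 (A x))

/-- The Cesàro average `C(t)x = t⁻¹ ∫₀ᵗ T(s)x ds`. -/
noncomputable def cesaro {X : Type*} [NormedAddCommGroup X] [NormedSpace ℂ X]
    (T : ℝ → X →L[ℂ] X) (t : ℝ) (x : X) : X :=
  t⁻¹ • ∫ s in (0:ℝ)..t, T s x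

/-- The local resolvent set of the (possibly unbounded) operator `A` with domain `D`
at `x`: the union of all open `U ⊆ ℂ` admitting an analytic `f : U → D` with
`(A - μ)f(μ) = x` on `U`. -/
def localResolventSet {X : Type*} [NormedAddCommGroup X] [NormedSpace ℂ X]
    (D : Set X) (A : X → X) (x : X) : Set ℂ :=
  {μ | ∃ U : Set ℂ, IsOpen U ∧ μ ∈ U ∧ ∃ f : ℂ → X, AnalyticOnNhd ℂ f U ∧
      ∀ z ∈ U, f z ∈ D ∧ A (f z) - z • f z = x}

/-- The local spectrum `σ_A(x) = ℂ \ ρ_A(x)`. -/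
def localSpectrum {X : Type*} [NormedAddCommGroup X] [NormedSpace ℂ X]
    (D : Set X) (A : X → X) (x : X) : Set ℂ :=
  (localResolventSet D A x)ᶜ

/-- `A` (with domain `D`) has the single valued extension property at `μ₀`:
on every open disk centred at `μ₀`, the only analytic `f` with values in `D`
satisfying `(z - A) f z = 0` is `f ≡ 0`. -/
def HasSVEPAt {X : Type*} [NormedAddCommGroup X] [NormedSpace ℂ X]
    (D : Set X) (A : X → X) (μ₀ : ℂ) : Prop :=
  ∀ r : ℝ, 0 < r → ∀ f : ℂ → X, AnalyticOnNhd ℂ f (ball μ₀ r) →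
    (∀ z ∈ ball μ₀ r, f z ∈ D ∧ z • f z - A (f z) = 0) →
    ∀ z ∈ ball μ₀ r, f z = 0

/-!
Since `A` is linear on its domain, `ρ_A(x) ⊆ ρ_A(Ax)`, and a point `μ ≠ 0` of `ρ_A(Ax)` lies
in `ρ_A(x)` (take `μ⁻¹ (f(μ) - x)` as local resolvent). So the two local spectra can only differ
at `0`, and `σ_A(x) ≠ σ_A(Ax)` forces `0 ∈ ρ_A(Ax)`: there is an analytic `f` near `0` with
`A f(z) - z f(z) = Ax`. At `z = 0` this puts `u = x - f(0)` in `ker A`, and passing to the limit in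
`A ((f(z) - f(0))/z) = f(z)`, closedness of `A` gives `f(0) = A f'(0)`. Hence `x = u + A a` with
`T(t) u = u` and `C(t) (A a) = (T(t) a - a)/t → 0`.
-/

open Set MeasureTheory

namespace IsGenerator

variable {X : Type*} [NormedAddCommGroup X] [NormedSpace ℂ X]
  {T : ℝ → X →L[ℂ] X} {D : Set X} {A : X → X}

theorem mem_of_tendsto_slope (hA : IsGenerator T D A) {x y : X}
    (h : Tendsto (fun t : ℝ => t⁻¹ • (T t x - x)) (𝓝[>] 0) (𝓝 y)) : x ∈ D ∧ A x = y :=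
  have hx := (hA.mem_domain_iff x).2 ⟨y, h⟩
  ⟨hx, tendsto_nhds_unique (hA.tendsto_of_mem x hx) h⟩

theorem add (hA : IsGenerator T D A) {x y : X} (hx : x ∈ D) (hy : y ∈ D) :
    x + y ∈ D ∧ A (x + y) = A x + A y :=
  hA.mem_of_tendsto_slope <|
    ((hA.tendsto_of_mem x hx).add (hA.tendsto_of_mem y hy)).congr fun t => by
      rw [← smul_add, map_add, add_sub_add_comm]

theorem sub (hA : IsGenerator T D A) {x y : X} (hx : x ∈ D) (hy : y ∈ D) :
    x - y ∈ D ∧ A (x - y) = A x - A y :=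
  hA.mem_of_tendsto_slope <|
    ((hA.tendsto_of_mem x hx).sub (hA.tendsto_of_mem y hy)).congr fun t => by
      rw [← smul_sub, map_sub, sub_sub_sub_comm]

theorem smul (hA : IsGenerator T D A) (c : ℂ) {x : X} (hx : x ∈ D) :
    c • x ∈ D ∧ A (c • x) = c • A x :=
  hA.mem_of_tendsto_slope <| ((hA.tendsto_of_mem x hx).const_smul c).congr fun t => by
    rw [map_smul, ← smul_sub, smul_comm]

theorem localResolventSet_subset_apply (hA : IsGenerator T D A) {x : X} (hx : x ∈ D) :
    localResolventSet D A x ⊆ localResolventSet D A (A x) := by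
  rintro μ ⟨U, hU, hμU, f, hf, hfU⟩
  refine ⟨U, hU, hμU, fun z => x + z • f z,
    fun z hz => analyticAt_const.add (analyticAt_id.smul (hf z hz)), fun z hz => ?_⟩
  obtain ⟨hfD, hfz⟩ := hfU z hz
  obtain ⟨hsmulD, hAsmul⟩ := hA.smul z hfD
  obtain ⟨haddD, hAadd⟩ := hA.add hx hsmulD
  refine ⟨haddD, ?_⟩
  rw [hAadd, hAsmul, smul_add, ← hfz, smul_sub]
  abel

theorem mem_localResolventSet_of_mem_apply (hA : IsGenerator T D A) {x : X} (hx : x ∈ D)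
    {μ : ℂ} (hμ : μ ≠ 0) (h : μ ∈ localResolventSet D A (A x)) :
    μ ∈ localResolventSet D A x := by
  obtain ⟨U, hU, hμU, f, hf, hfU⟩ := h
  refine ⟨U \ {0}, hU.sdiff isClosed_singleton, ⟨hμU, hμ⟩, fun z => z⁻¹ • (f z - x),
    fun z hz => (analyticAt_id.inv hz.2).smul ((hf z hz.1).sub analyticAt_const),
    fun z hz => ?_⟩
  obtain ⟨hfD, hfz⟩ := hfU z hz.1
  obtain ⟨hsubD, hAsub⟩ := hA.sub hfD hx
  obtain ⟨hsmulD, hAsmul⟩ := hA.smul z⁻¹ hsubD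
  refine ⟨hsmulD, ?_⟩
  rw [hAsmul, hAsub, ← hfz, sub_sub_cancel, inv_smul_smul₀ hz.2, smul_inv_smul₀ hz.2,
    sub_sub_cancel]

theorem zero_mem_localResolventSet_apply (hA : IsGenerator T D A) {x : X} (hx : x ∈ D)
    (hne : localSpectrum D A x ≠ localSpectrum D A (A x)) :
    (0 : ℂ) ∈ localResolventSet D A (A x) := by
  by_contra h0
  refine hne (congrArg compl ((hA.localResolventSet_subset_apply hx).antisymm fun μ hμ => ?_))
  exact hA.mem_localResolventSet_of_mem_apply hx (ne_of_mem_of_not_mem hμ h0) hμ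

end IsGenerator

namespace IsC0Semigroup

variable {X : Type*} [NormedAddCommGroup X] [NormedSpace ℂ X]
  {T : ℝ → X →L[ℂ] X} {D : Set X} {A : X → X}

theorem intervalIntegrable (hT : IsC0Semigroup T) (z : X) {t : ℝ} (ht : 0 ≤ t) :
    IntervalIntegrable (fun s => T s z) volume 0 t :=
  ((hT.strong_continuity z).mono Icc_subset_Ici_self).intervalIntegrable_of_Icc ht

theorem exists_norm_le_of_mem_Icc [CompleteSpace X] (hT : IsC0Semigroup T) (t : ℝ) :
    ∃ M : ℝ, ∀ s ∈ Icc 0 t, ‖T s‖ ≤ M := by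
  have hpointwise : ∀ v : X, ∃ C : ℝ, ∀ s : Icc (0 : ℝ) t, ‖T s v‖ ≤ C := fun v => by
    obtain ⟨C, hC⟩ := isCompact_Icc.exists_bound_of_continuousOn
      ((hT.strong_continuity v).mono Icc_subset_Ici_self)
    exact ⟨C, fun s => hC s s.2⟩
  obtain ⟨M, hM⟩ := banach_steinhaus (g := fun s : Icc (0 : ℝ) t => T s) hpointwise
  exact ⟨M, fun s hs => hM ⟨s, hs⟩⟩

theorem continuous_integral [CompleteSpace X] (hT : IsC0Semigroup T) {t : ℝ} (ht : 0 ≤ t) :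
    Continuous fun w => ∫ s in (0 : ℝ)..t, T s w := by
  obtain ⟨M, hM⟩ := hT.exists_norm_le_of_mem_Icc t
  let I : X →+ X := .mk' (fun w => ∫ s in (0 : ℝ)..t, T s w) fun v w => by
    simp only [_root_.map_add]
    exact intervalIntegral.integral_add (hT.intervalIntegrable v ht) (hT.intervalIntegrable w ht)
  refine AddMonoidHomClass.continuous_of_bound I (M * t) fun w => ?_
  calc ‖∫ s in (0 : ℝ)..t, T s w‖ ≤ M * ‖w‖ * |t - 0| :=
        intervalIntegral.norm_integral_le_of_norm_le_const fun s hs => by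
          rw [uIoc_of_le ht] at hs
          exact ((T s).le_opNorm w).trans
            (mul_le_mul_of_nonneg_right (hM s ⟨hs.1.le, hs.2⟩) (norm_nonneg w))
    _ = M * t * ‖w‖ := by rw [sub_zero, abs_of_nonneg ht]; ring

theorem tendsto_average_integral [CompleteSpace X] (hT : IsC0Semigroup T) (w : X) :
    Tendsto (fun t : ℝ => t⁻¹ • ∫ s in (0 : ℝ)..t, T s w) (𝓝[>] 0) (𝓝 w) := by
  have hcont : ContinuousOn (fun s => T s w) (Ioi 0) :=
    (hT.strong_continuity w).mono Ioi_subset_Ici_self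
  have hderiv : HasDerivWithinAt (fun u => ∫ s in (0 : ℝ)..u, T s w) (T 0 w) (Ici 0) 0 :=
    intervalIntegral.integral_hasDerivWithinAt_right IntervalIntegrable.refl
      (hcont.stronglyMeasurableAtFilter_nhdsWithin measurableSet_Ioi 0)
      ((hT.strong_continuity w 0 self_mem_Ici).mono Ioi_subset_Ici_self)
  rw [hasDerivWithinAt_iff_tendsto_slope, Ici_sdiff_left, hT.map_zero] at hderiv
  exact hderiv.congr fun t => by simp [slope_def_module]

theorem hasDerivWithinAt_Ioi (hT : IsC0Semigroup T) (hA : IsGenerator T D A) {v : X}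
    (hv : v ∈ D) {τ : ℝ} (hτ : 0 ≤ τ) :
    HasDerivWithinAt (fun s => T s v) (T τ (A v)) (Ioi τ) τ := by
  rw [hasDerivWithinAt_iff_tendsto_slope' self_notMem_Ioi, ← add_zero τ, ← map_add_left_nhdsGT,
    tendsto_map'_iff, add_zero]
  refine (((T τ).continuous.tendsto _).comp (hA.tendsto_of_mem v hv)).congr' ?_
  filter_upwards [self_mem_nhdsWithin] with ε (hε : 0 < ε)
  simp [slope_def_module, hT.map_add τ ε hτ hε.le]

theorem integral_apply_generator [CompleteSpace X] (hT : IsC0Semigroup T)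
    (hA : IsGenerator T D A) {v : X} (hv : v ∈ D) {t : ℝ} (ht : 0 ≤ t) :
    ∫ s in (0 : ℝ)..t, T s (A v) = T t v - v := by
  rw [intervalIntegral.integral_eq_sub_of_hasDeriv_right_of_le ht
    ((hT.strong_continuity v).mono Icc_subset_Ici_self)
    (fun τ hτ => hT.hasDerivWithinAt_Ioi hA hv hτ.1.le) (hT.intervalIntegrable (A v) ht),
    hT.map_zero]
  rfl

theorem apply_eq_self_of_generator_eq_zero [CompleteSpace X] (hT : IsC0Semigroup T)
    (hA : IsGenerator T D A) {u : X} (hu : u ∈ D) (hAu : A u = 0) {t : ℝ} (ht : 0 ≤ t) :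
    T t u = u := by
  have h := hT.integral_apply_generator hA hu ht
  rw [hAu] at h
  simp only [_root_.map_zero, intervalIntegral.integral_zero] at h
  exact sub_eq_zero.1 h.symm

theorem cesaro_add (hT : IsC0Semigroup T) {t : ℝ} (ht : 0 ≤ t) (u v : X) :
    cesaro T t (u + v) = cesaro T t u + cesaro T t v := by
  simp only [cesaro, _root_.map_add]
  rw [intervalIntegral.integral_add (hT.intervalIntegrable u ht) (hT.intervalIntegrable v ht),
    smul_add]

theorem cesaro_of_generator_eq_zero [CompleteSpace X] (hT : IsC0Semigroup T)
    (hA : IsGenerator T D A) {u : X} (hu : u ∈ D) (hAu : A u = 0) {t : ℝ} (ht : 0 < t) :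
    cesaro T t u = u := by
  have hconst : ∫ s in (0 : ℝ)..t, T s u = ∫ _ in (0 : ℝ)..t, u :=
    intervalIntegral.integral_congr fun s hs => by
      rw [uIcc_of_le ht.le] at hs
      exact hT.apply_eq_self_of_generator_eq_zero hA hu hAu hs.1
  rw [cesaro, hconst, intervalIntegral.integral_const, sub_zero, inv_smul_smul₀ ht.ne']

theorem tendsto_cesaro_generator [CompleteSpace X] (hT : IsC0Semigroup T)
    (hA : IsGenerator T D A) {a : X} (ha : a ∈ D)
    (hgrowth : Tendsto (fun t : ℝ => ‖T t a‖ / t) atTop (𝓝 0)) :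
    Tendsto (fun t : ℝ => cesaro T t (A a)) atTop (𝓝 0) := by
  have hbound : Tendsto (fun t : ℝ => ‖T t a‖ / t + ‖a‖ / t) atTop (𝓝 0) := by
    simpa using hgrowth.add (tendsto_const_nhds.div_atTop tendsto_id)
  refine squeeze_zero_norm' ?_ hbound
  filter_upwards [eventually_gt_atTop 0] with t ht
  rw [cesaro, hT.integral_apply_generator hA ha ht.le, norm_smul, norm_inv,
    Real.norm_of_nonneg ht.le, ← add_div, inv_mul_eq_div]
  gcongr
  exact norm_sub_le _ _

end IsC0Semigroup

namespace IsGenerator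

variable {X : Type*} [NormedAddCommGroup X] [NormedSpace ℂ X] [CompleteSpace X]
  {T : ℝ → X →L[ℂ] X} {D : Set X} {A : X → X}

theorem mem_of_tendsto (hT : IsC0Semigroup T) (hA : IsGenerator T D A) {ι : Type*}
    {l : Filter ι} [l.NeBot] {u : ι → X} {v w : X} (hmem : ∀ᶠ i in l, u i ∈ D)
    (hu : Tendsto u l (𝓝 v)) (hAu : Tendsto (fun i => A (u i)) l (𝓝 w)) : v ∈ D ∧ A v = w := by
  have hintegral : ∀ t : ℝ, 0 ≤ t → t⁻¹ • (T t v - v) = t⁻¹ • ∫ s in (0 : ℝ)..t, T s w :=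
    fun t ht => congrArg _ <| tendsto_nhds_unique
      ((((T t).continuous.tendsto v).comp hu).sub hu)
      ((((hT.continuous_integral ht).tendsto w).comp hAu).congr' <| by
        filter_upwards [hmem] with i hi
        exact hT.integral_apply_generator hA hi ht)
  refine hA.mem_of_tendsto_slope ((hT.tendsto_average_integral w).congr' ?_)
  filter_upwards [self_mem_nhdsWithin] with t (ht : 0 < t)
  exact (hintegral t ht.le).symm

theorem mem_of_hasDerivAt (hT : IsC0Semigroup T) (hA : IsGenerator T D A) {f : ℂ → X} {f' : X}
    (hf : HasDerivAt f f' 0) (hfD : ∀ᶠ z in 𝓝 0, f z ∈ D ∧ A (f z) - z • f z = A (f 0)) :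
    f' ∈ D ∧ A f' = f 0 := by
  have hf0 : f 0 ∈ D := hfD.self_of_nhds.1
  have hquot : ∀ᶠ z in 𝓝[≠] 0, z⁻¹ • (f z - f 0) ∈ D ∧ A (z⁻¹ • (f z - f 0)) = f z := by
    filter_upwards [self_mem_nhdsWithin, nhdsWithin_le_nhds hfD] with z (hz : z ≠ 0) ⟨hfz, hAfz⟩
    obtain ⟨hsubD, hAsub⟩ := hA.sub hfz hf0
    obtain ⟨hsmulD, hAsmul⟩ := hA.smul z⁻¹ hsubD
    refine ⟨hsmulD, ?_⟩
    rw [hAsmul, hAsub, ← hAfz, sub_sub_cancel, inv_smul_smul₀ hz]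
  have hslope : Tendsto (fun z => z⁻¹ • (f z - f 0)) (𝓝[≠] 0) (𝓝 f') := by
    simpa only [zero_add] using hf.tendsto_slope_zero
  exact mem_of_tendsto hT hA (hquot.mono fun z hz => hz.1) hslope
    ((hf.continuousAt.tendsto.mono_left nhdsWithin_le_nhds).congr'
      (hquot.mono fun z hz => hz.2.symm))

theorem exists_eq_add_apply_of_zero_mem_localResolventSet (hT : IsC0Semigroup T)
    (hA : IsGenerator T D A) {x : X} (hx : x ∈ D) (h0 : (0 : ℂ) ∈ localResolventSet D A (A x)) :
    ∃ u ∈ D, A u = 0 ∧ ∃ a ∈ D, x = u + A a := by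
  obtain ⟨U, hU, h0U, f, hf, hfU⟩ := h0
  have hAf0 : A (f 0) = A x := by simpa using (hfU 0 h0U).2
  obtain ⟨ha, hAa⟩ := hA.mem_of_hasDerivAt hT (hf 0 h0U).differentiableAt.hasDerivAt <| by
    filter_upwards [hU.mem_nhds h0U] with z hz
    exact ⟨(hfU z hz).1, (hfU z hz).2.trans hAf0.symm⟩
  obtain ⟨hu, hAu⟩ := hA.sub hx (hfU 0 h0U).1
  exact ⟨x - f 0, hu, by rw [hAu, hAf0, sub_self], deriv f 0, ha, by rw [hAa, sub_add_cancel]⟩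

end IsGenerator

theorem localMeanErgodic_of_localSpectrum_ne_general
    {X : Type*} [NormedAddCommGroup X] [NormedSpace ℂ X] [CompleteSpace X]
    (T : ℝ → X →L[ℂ] X) (D : Set X) (A : X → X)
    (hT : IsC0Semigroup T) (hA : IsGenerator T D A)
    (hgrowth : ∀ v : X, Tendsto (fun t : ℝ => ‖T t v‖ / t) atTop (𝓝 0))
    (x : X) (hxD : x ∈ D)
    (hne : localSpectrum D A x ≠ localSpectrum D A (A x)) :
    ∃ y : X, Tendsto (fun t : ℝ => cesaro T t x) atTop (𝓝 y) := by
  obtain ⟨u, hu, hAu, a, ha, rfl⟩ := hA.exists_eq_add_apply_of_zero_mem_localResolventSet hT hxD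
    (hA.zero_mem_localResolventSet_apply hxD hne)
  refine ⟨u, ?_⟩
  have hlim := (tendsto_const_nhds (x := u)).add (hT.tendsto_cesaro_generator hA ha (hgrowth a))
  rw [add_zero] at hlim
  refine hlim.congr' ?_
  filter_upwards [eventually_gt_atTop 0] with t ht
  rw [hT.cesaro_add ht.le, hT.cesaro_of_generator_eq_zero hA hu hAu ht]

/-- If `‖T(t)v‖/t → 0` for every `v`, `A` has the SVEP, `x ∈ D(A)` and
`σ_A(x) ≠ σ_A(Ax)`, then `T(t)` is local mean ergodic at `x`. -/
theorem localMeanErgodic_of_localSpectrum_ne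
    {X : Type*} [NormedAddCommGroup X] [NormedSpace ℂ X] [CompleteSpace X]
    (T : ℝ → X →L[ℂ] X) (D : Set X) (A : X → X)
    (hT : IsC0Semigroup T) (hA : IsGenerator T D A)
    (hgrowth : ∀ v : X, Tendsto (fun t : ℝ => ‖T t v‖ / t) atTop (𝓝 0))
    (hSVEP : ∀ μ : ℂ, HasSVEPAt D A μ) (x : X) (hxD : x ∈ D)
    (hne : localSpectrum D A x ≠ localSpectrum D A (A x)) :
    ∃ y : X, Tendsto (fun t : ℝ => cesaro T t x) atTop (𝓝 y) :=
  localMeanErgodic_of_localSpectrum_ne_general T D A hT hA hgrowth x hxD hne
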